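/- Let D ⊆ ℝ^k be a nonempty compact convex set, q : D → ℝ continuous, M > sup q, and let A = ẽpi(q) = {(x,y) : x ∈ D, q(x) ≤ y ≤ M}. Then the averaged Minkowski sums (1/n)·A_n (A_n the n-fold Minkowski sum of A with itself) converge in the Hausdorff metric to ẽpi(q_*), the truncated epigraph of the convex minorant q_* of q. -/

import Mathlib

open Pointwise Filter

/-- n-fold Minkowski sum of a set with itself (with `msum A 1 = A`). -/
def msum {E : Type*} [AddCommMonoid E] (A : Set E) : ℕ → Set E
  | 0 => {0}
  | 1 => A
  | (n+1) => msum A n + A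

lemma msum_succ {E : Type*} [AddCommMonoid E] (A : Set E) (n : ℕ) (hn : 1 ≤ n) :
    msum A (n+1) = msum A n + A := by
  match n, hn with
  | (k+1), _ => rfl

lemma msum_add {E : Type*} [AddCommMonoid E] (A : Set E) :
    ∀ m n : ℕ, 1 ≤ m → 1 ≤ n → msum A (m + n) = msum A m + msum A n := by
  intro m n hm hn
  induction n, hn using Nat.le_induction with
  | base => exact msum_succ A m hm
  | succ n hn ih =>
      rw [show m + (n+1) = (m+n)+1 from rfl, msum_succ A (m+n) (le_trans hm (Nat.le_add_right _ _)),
        ih, msum_succ A n hn, add_assoc]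

lemma nsmul_mem_msum {E : Type*} [AddCommMonoid E] {A : Set E} {z : E} (hz : z ∈ A) :
    ∀ n : ℕ, 1 ≤ n → n • z ∈ msum A n := by
  intro n hn
  induction n, hn using Nat.le_induction with
  | base => simpa [msum] using hz
  | succ n hn ih =>
      rw [msum_succ A n hn, succ_nsmul]
      exact Set.add_mem_add ih hz

lemma sum_nsmul_mem_msum {E : Type*} [AddCommMonoid E] {A : Set E} {ι : Type*}
    (t : Finset ι) (c : ι → ℕ) (z : ι → E) (hz : ∀ i ∈ t, z i ∈ A)
    (hsum : 1 ≤ ∑ i ∈ t, c i) :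
    ∑ i ∈ t, c i • z i ∈ msum A (∑ i ∈ t, c i) := by
  classical
  induction t using Finset.induction with
  | empty => simp at hsum
  | insert _ _ hat ih =>
      rename_i a t
      rw [Finset.sum_insert hat, Finset.sum_insert hat]
      rcases Nat.eq_zero_or_pos (c a) with h0 | h1
      · rcases Nat.eq_zero_or_pos (∑ i ∈ t, c i) with hs0 | hs1
        · rw [Finset.sum_insert hat, h0, hs0] at hsum; simp at hsum
        · have := ih (fun i hi => hz i (Finset.mem_insert_of_mem hi)) hs1
          simpa [h0] using this
      · rcases Nat.eq_zero_or_pos (∑ i ∈ t, c i) with hs0 | hs1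
        · have hz0 : ∑ i ∈ t, c i • z i = 0 := by
            apply Finset.sum_eq_zero
            intro i hi
            have : c i = 0 := by
              have := Finset.sum_eq_zero_iff.mp hs0 i hi
              exact this
            simp [this]
          rw [hz0, hs0, add_zero, add_zero]
          exact nsmul_mem_msum (hz a (Finset.mem_insert_self a t)) _ h1
        · rw [msum_add A _ _ h1 hs1]
          exact Set.add_mem_add (nsmul_mem_msum (hz a (Finset.mem_insert_self a t)) _ h1)
            (ih (fun i hi => hz i (Finset.mem_insert_of_mem hi)) hs1)

lemma avg_mem_convexHull {E : Type*} [NormedAddCommGroup E] [NormedSpace ℝ E] {A : Set E} :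
    ∀ n : ℕ, 1 ≤ n → ∀ v ∈ msum A n, (n : ℝ)⁻¹ • v ∈ convexHull ℝ A := by
  intro n hn
  induction n, hn using Nat.le_induction with
  | base => intro v hv; simpa using subset_convexHull ℝ A hv
  | succ n hn ih =>
      intro v hv
      rw [msum_succ A n hn] at hv
      rcases hv with ⟨w, hw, a, ha, rfl⟩
      have hn0 : (0:ℝ) < (n:ℝ) := by exact_mod_cast hn
      have hn1 : (0:ℝ) < ((n:ℕ)+1 : ℝ) := by positivity
      have key : ((n+1 : ℕ) : ℝ)⁻¹ • (w + a)
          = ((n:ℝ)/((n:ℝ)+1)) • ((n:ℝ)⁻¹ • w) + (1/((n:ℝ)+1)) • a := by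
        push_cast
        rw [smul_smul, smul_add]
        congr 1
        · congr 1
          field_simp
        · congr 1
          field_simp
      rw [key]
      exact (convex_convexHull ℝ A) (ih w hw) (subset_convexHull ℝ A ha)
        (by positivity) (by positivity) (by field_simp)

lemma exists_approx {E : Type*} [NormedAddCommGroup E] [NormedSpace ℝ E] {A : Set E}
    {R : ℝ} (hR : ∀ a ∈ A, ‖a‖ ≤ R) {c : E} (hc : c ∈ convexHull ℝ A) :
    ∃ CC : ℝ, ∀ n : ℕ, 1 ≤ n → ∃ p ∈ ((n : ℝ)⁻¹) • msum A n, dist c p ≤ CC / n := by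
  classical
  rw [convexHull_eq] at hc
  obtain ⟨ι, t, w, z, hw0, hw1, hzA, hcm⟩ := hc
  rw [Finset.centerMass_eq_of_sum_1 _ _ hw1] at hcm
  have htne : t.Nonempty := Finset.nonempty_of_sum_ne_zero (by rw [hw1]; norm_num)
  obtain ⟨i₀, hi₀⟩ := htne
  have hR0 : 0 ≤ R := le_trans (norm_nonneg _) (hR _ (hzA i₀ hi₀))
  set m : ℕ := t.card with hm
  have hm1 : 1 ≤ m := Finset.card_pos.mpr ⟨i₀, hi₀⟩
  refine ⟨(m : ℝ) * ((m : ℝ) + 1) * R, ?_⟩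
  intro n hn
  have hn0 : (0:ℝ) < (n:ℝ) := by exact_mod_cast hn
  set f : ι → ℕ := fun i => ⌊(n : ℝ) * w i⌋₊ with hf
  set S : ℕ := ∑ i ∈ t, f i with hS
  have hfle : ∀ i ∈ t, (f i : ℝ) ≤ (n : ℝ) * w i := fun i hi =>
    Nat.floor_le (mul_nonneg hn0.le (hw0 i hi))
  have hflt : ∀ i ∈ t, (n : ℝ) * w i < (f i : ℝ) + 1 := fun i hi =>
    Nat.lt_floor_add_one _
  have hSn : S ≤ n := by
    have : (S : ℝ) ≤ (n : ℝ) := by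
      rw [hS]
      push_cast
      calc ∑ i ∈ t, (f i : ℝ) ≤ ∑ i ∈ t, (n : ℝ) * w i := Finset.sum_le_sum hfle
        _ = (n : ℝ) := by rw [← Finset.mul_sum, hw1, mul_one]
    exact_mod_cast this
  set d : ℕ := n - S with hd
  have hdm : (d : ℝ) ≤ (m : ℝ) := by
    have h1 : (n : ℝ) ≤ (S : ℝ) + (m : ℝ) := by
      calc (n : ℝ) = ∑ i ∈ t, (n : ℝ) * w i := by rw [← Finset.mul_sum, hw1, mul_one]
        _ ≤ ∑ i ∈ t, ((f i : ℝ) + 1) := Finset.sum_le_sum (fun i hi => (hflt i hi).le)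
        _ = (S : ℝ) + (m : ℝ) := by rw [Finset.sum_add_distrib]; push_cast [hS]; simp; exact hm.symm
    have : (d : ℝ) = (n : ℝ) - (S : ℝ) := by
      rw [hd]; push_cast [Nat.cast_sub hSn]; ring
    rw [this]; linarith
  set kk : ι → ℕ := fun i => f i + if i = i₀ then d else 0 with hkk
  have hsum : ∑ i ∈ t, kk i = n := by
    rw [hkk]
    rw [Finset.sum_add_distrib, Finset.sum_ite_eq' t i₀ (fun _ => d)]
    simp [hi₀, ← hS, hd, Nat.add_sub_cancel' hSn]
  have hp0 : ∑ i ∈ t, kk i • z i ∈ msum A n := by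
    have := sum_nsmul_mem_msum t kk z hzA (by rw [hsum]; exact hn)
    rwa [hsum] at this
  refine ⟨(n : ℝ)⁻¹ • ∑ i ∈ t, kk i • z i, Set.smul_mem_smul_set hp0, ?_⟩
  -- rewrite p as a real-coefficient sum
  have hpr : (n : ℝ)⁻¹ • ∑ i ∈ t, kk i • z i = ∑ i ∈ t, ((kk i : ℝ) / n) • z i := by
    rw [Finset.smul_sum]
    refine Finset.sum_congr rfl (fun i hi => ?_)
    rw [← Nat.cast_smul_eq_nsmul ℝ, smul_smul, div_eq_inv_mul]
  rw [hpr, dist_eq_norm, ← hcm, ← Finset.sum_sub_distrib]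
  have key : ∀ i ∈ t, ‖w i • z i - ((kk i : ℝ) / n) • z i‖ ≤ ((m : ℝ) + 1) / n * R := by
    intro i hi
    rw [← sub_smul, norm_smul]
    have hzb : ‖z i‖ ≤ R := hR _ (hzA i hi)
    have hm0 : (0:ℝ) ≤ (m:ℝ) := Nat.cast_nonneg m
    have hfb : |w i - (f i : ℝ) / n| ≤ 1 / n := by
      have e1 : (f i : ℝ) / n ≤ w i := by
        rw [div_le_iff₀ hn0]; nlinarith [hfle i hi]
      have e2 : w i ≤ ((f i : ℝ) + 1) / n := by
        rw [le_div_iff₀ hn0]; nlinarith [hflt i hi]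
      have e3 : ((f i : ℝ) + 1) / n = (f i : ℝ)/n + 1/n := add_div _ _ _
      rw [abs_le]
      constructor
      · have : (0:ℝ) ≤ 1/n := by positivity
        linarith
      · linarith
    have hwb : |w i - (kk i : ℝ) / n| ≤ ((m : ℝ) + 1) / n := by
      rcases eq_or_ne i i₀ with rfl | hne
      · have hk : (kk i : ℝ) = (f i : ℝ) + (d : ℝ) := by simp [hkk]
        have hsplit : w i - ((f i : ℝ) + (d : ℝ)) / n = (w i - (f i : ℝ) / n) - (d : ℝ) / n := by
          ring
        rw [hk, hsplit]
        calc |(w i - (f i : ℝ) / n) - (d : ℝ) / n|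
            ≤ |w i - (f i : ℝ) / n| + |(d : ℝ) / n| := abs_sub _ _
          _ ≤ 1 / n + (m : ℝ) / n := by
              refine add_le_add hfb ?_
              rw [abs_of_nonneg (by positivity)]
              gcongr
          _ = ((m : ℝ) + 1) / n := by ring
      · have hk : (kk i : ℝ) = (f i : ℝ) := by simp [hkk, hne]
        rw [hk]
        refine hfb.trans ?_
        gcongr
        linarith
    exact mul_le_mul hwb hzb (norm_nonneg _) (by positivity)
  calc ‖∑ i ∈ t, (w i • z i - ((kk i : ℝ) / n) • z i)‖
      ≤ ∑ i ∈ t, ‖w i • z i - ((kk i : ℝ) / n) • z i‖ := norm_sum_le _ _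
    _ ≤ ∑ _i ∈ t, ((m : ℝ) + 1) / n * R := Finset.sum_le_sum key
    _ = (m : ℝ) * (((m : ℝ) + 1) / n * R) := by
        rw [Finset.sum_const, ← hm, nsmul_eq_mul]
    _ = (m : ℝ) * ((m : ℝ) + 1) * R / n := by ring

theorem stmt6 {k : ℕ} (D : Set (EuclideanSpace ℝ (Fin k)))
    (hD : IsCompact D) (hDne : D.Nonempty) (hDconv : Convex ℝ D)
    (q : EuclideanSpace ℝ (Fin k) → ℝ) (hq : ContinuousOn q D)
    (M : ℝ) (hM : ∀ x ∈ D, q x < M)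
    (qstar : EuclideanSpace ℝ (Fin k) → ℝ)
    (hqstar : ∀ x, qstar x = sSup {z : ℝ | ∃ h : EuclideanSpace ℝ (Fin k) → ℝ,
      ConvexOn ℝ D h ∧ (∀ y ∈ D, h y ≤ q y) ∧ z = h x}) :
    Tendsto (fun n : ℕ =>
        EMetric.hausdorffEdist
          (((n : ℝ)⁻¹) • msum {p : EuclideanSpace ℝ (Fin k) × ℝ | p.1 ∈ D ∧ q p.1 ≤ p.2 ∧ p.2 ≤ M} n)
          {p : EuclideanSpace ℝ (Fin k) × ℝ | p.1 ∈ D ∧ qstar p.1 ≤ p.2 ∧ p.2 ≤ M})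
      atTop (nhds 0) := by
  classical
  set A : Set (EuclideanSpace ℝ (Fin k) × ℝ) :=
    {p | p.1 ∈ D ∧ q p.1 ≤ p.2 ∧ p.2 ≤ M} with hA
  set B : Set (EuclideanSpace ℝ (Fin k) × ℝ) :=
    {p | p.1 ∈ D ∧ qstar p.1 ≤ p.2 ∧ p.2 ≤ M} with hB
  obtain ⟨x₀, hx₀⟩ := hDne
  have himg : IsCompact (q '' D) := hD.image_of_continuousOn hq
  set c₀ : ℝ := sInf (q '' D) with hc₀def
  have hc₀ : ∀ y ∈ D, c₀ ≤ q y := fun y hy => csInf_le himg.bddBelow ⟨y, hy, rfl⟩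
  have hSc : ∀ x, c₀ ∈ {z : ℝ | ∃ h : EuclideanSpace ℝ (Fin k) → ℝ,
      ConvexOn ℝ D h ∧ (∀ y ∈ D, h y ≤ q y) ∧ z = h x} :=
    fun x => ⟨fun _ => c₀, convexOn_const _ hDconv, fun y hy => hc₀ y hy, rfl⟩
  have hub : ∀ x ∈ D, ∀ z ∈ {z : ℝ | ∃ h : EuclideanSpace ℝ (Fin k) → ℝ,
      ConvexOn ℝ D h ∧ (∀ y ∈ D, h y ≤ q y) ∧ z = h x}, z ≤ q x := by
    rintro x hx z ⟨h, h1, h2, rfl⟩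
    exact h2 x hx
  have hqq : ∀ x ∈ D, qstar x ≤ q x := fun x hx => by
    rw [hqstar]; exact csSup_le ⟨c₀, hSc x⟩ (hub x hx)
  have hle : ∀ h : EuclideanSpace ℝ (Fin k) → ℝ, ConvexOn ℝ D h → (∀ y ∈ D, h y ≤ q y) →
      ∀ x ∈ D, h x ≤ qstar x := by
    intro h h1 h2 x hx
    rw [hqstar]
    exact le_csSup ⟨q x, hub x hx⟩ ⟨h, h1, h2, rfl⟩
  have hc₀qstar : ∀ x ∈ D, c₀ ≤ qstar x :=
    fun x hx => hle _ (convexOn_const _ hDconv) (fun y hy => hc₀ y hy) x hx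
  have hqstar_conv : ∀ x ∈ D, ∀ y ∈ D, ∀ a b : ℝ, 0 ≤ a → 0 ≤ b → a + b = 1 →
      qstar (a • x + b • y) ≤ a * qstar x + b * qstar y := by
    intro x hx y hy a b ha hb hab
    rw [hqstar]
    refine csSup_le ⟨c₀, hSc _⟩ ?_
    rintro z ⟨h, h1, h2, rfl⟩
    calc h (a • x + b • y) ≤ a * h x + b * h y := by
          have := h1.2 hx hy ha hb hab
          simpa [smul_eq_mul] using this
      _ ≤ a * qstar x + b * qstar y :=
          add_le_add (mul_le_mul_of_nonneg_left (hle h h1 h2 x hx) ha)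
            (mul_le_mul_of_nonneg_left (hle h h1 h2 y hy) hb)
  have hAB : A ⊆ B := by
    rintro p ⟨h1, h2, h3⟩
    exact ⟨h1, (hqq p.1 h1).trans h2, h3⟩
  have hBconv : Convex ℝ B := by
    rintro ⟨x, u⟩ ⟨hx, hu1, hu2⟩ ⟨y, v⟩ ⟨hy, hv1, hv2⟩ a b ha hb hab
    refine ⟨hDconv hx hy ha hb hab, ?_, ?_⟩
    · show qstar (a • x + b • y) ≤ a * u + b * v
      exact (hqstar_conv x hx y hy a b ha hb hab).trans
        (add_le_add (mul_le_mul_of_nonneg_left hu1 ha) (mul_le_mul_of_nonneg_left hv1 hb))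
    · show a * u + b * v ≤ M
      calc a * u + b * v ≤ a * M + b * M :=
            add_le_add (mul_le_mul_of_nonneg_left hu2 ha) (mul_le_mul_of_nonneg_left hv2 hb)
        _ = M := by rw [← add_mul, hab, one_mul]
  have hCB : convexHull ℝ A ⊆ B := convexHull_min hAB hBconv
  have hBsub : B ⊆ D ×ˢ Set.Icc c₀ M := by
    rintro ⟨x, u⟩ ⟨hx, h1, h2⟩
    exact ⟨hx, (hc₀qstar x hx).trans h1, h2⟩
  have hAbd : Bornology.IsBounded A :=
    ((hD.isBounded.prod (Metric.isBounded_Icc c₀ M)).subset (hAB.trans hBsub))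
  have hBbd : Bornology.IsBounded B :=
    ((hD.isBounded.prod (Metric.isBounded_Icc c₀ M)).subset hBsub)
  obtain ⟨R, hR⟩ := hAbd.exists_norm_le
  set C' : Set (EuclideanSpace ℝ (Fin k) × ℝ) := closure (convexHull ℝ A) with hC'def
  have hC'conv : Convex ℝ C' := (convex_convexHull ℝ A).closure
  have hC'closed : IsClosed C' := isClosed_closure
  have hC'bd : Bornology.IsBounded C' := (isBounded_convexHull.mpr hAbd).closure
  obtain ⟨R', hR'⟩ := hC'bd.exists_norm_le
  have hMA : ∀ x ∈ D, ((x, M) : EuclideanSpace ℝ (Fin k) × ℝ) ∈ A :=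
    fun x hx => ⟨hx, (hM x hx).le, le_refl M⟩
  set g : EuclideanSpace ℝ (Fin k) → ℝ := fun x => sInf {z | (x, z) ∈ C'} with hgdef
  have hfib_closed : ∀ x, IsClosed {z : ℝ | (x, z) ∈ C'} := fun x =>
    hC'closed.preimage (continuous_const.prodMk continuous_id)
  have hfib_bdd : ∀ x, BddBelow {z : ℝ | (x, z) ∈ C'} := by
    intro x
    refine ⟨-R', fun z hz => ?_⟩
    have h1 := hR' _ hz
    have h2 : ‖z‖ ≤ ‖((x, z) : EuclideanSpace ℝ (Fin k) × ℝ)‖ := by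
      rw [Prod.norm_def]; exact le_max_right _ _
    rw [Real.norm_eq_abs] at h2
    have := (abs_le.mp (h2.trans h1)).1
    linarith
  have hgmem : ∀ x ∈ D, ((x, g x) : EuclideanSpace ℝ (Fin k) × ℝ) ∈ C' := fun x hx =>
    (hfib_closed x).csInf_mem ⟨M, subset_closure (subset_convexHull ℝ A (hMA x hx))⟩ (hfib_bdd x)
  have hgq : ∀ x ∈ D, g x ≤ q x := fun x hx =>
    csInf_le (hfib_bdd x) (subset_closure (subset_convexHull ℝ A ⟨hx, le_refl _, (hM x hx).le⟩))
  have hgconv : ConvexOn ℝ D g := by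
    refine ⟨hDconv, ?_⟩
    intro x hx y hy a b ha hb hab
    refine csInf_le (hfib_bdd _) ?_
    have hmem := hC'conv (hgmem x hx) (hgmem y hy) ha hb hab
    have heq : a • ((x, g x) : EuclideanSpace ℝ (Fin k) × ℝ) + b • (y, g y)
        = (a • x + b • y, a * g x + b * g y) := by
      simp [Prod.ext_iff, smul_eq_mul]
    rw [heq] at hmem
    simpa [smul_eq_mul] using hmem
  have hgqstar : ∀ x ∈ D, g x ≤ qstar x := fun x hx => hle g hgconv hgq x hx
  have hBC' : B ⊆ C' := by
    rintro ⟨x, y⟩ ⟨hx, h1, h2⟩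
    have hgy : g x ≤ y := le_trans (hgqstar x hx) h1
    have hgM : g x ≤ M := le_trans hgy h2
    have hyseg : y ∈ segment ℝ (g x) M := by
      rw [segment_eq_Icc hgM]; exact ⟨hgy, h2⟩
    obtain ⟨a, b, ha, hb, hab, hy⟩ := hyseg
    have hmem := hC'conv (hgmem x hx)
      (subset_closure (subset_convexHull ℝ A (hMA x hx))) ha hb hab
    have heq : a • ((x, g x) : EuclideanSpace ℝ (Fin k) × ℝ) + b • (x, M) = (x, y) := by
      simp only [Prod.ext_iff, Prod.fst_add, Prod.snd_add, Prod.smul_fst, Prod.smul_snd,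
        smul_eq_mul]
      constructor
      · rw [← add_smul, hab, one_smul]
      · exact hy
    rwa [heq] at hmem
  have hSnB : ∀ n : ℕ, 1 ≤ n → ((n : ℝ)⁻¹) • msum A n ⊆ B := by
    intro n hn p hp
    obtain ⟨v, hv, rfl⟩ := hp
    exact hCB (avg_mem_convexHull n hn v hv)
  rw [ENNReal.tendsto_atTop_zero]
  intro ε hε
  obtain ⟨δ, hδ0, hδε⟩ := exists_between hε
  have hδtop : δ ≠ ⊤ := (hδε.trans_le le_top).ne
  set r : ℝ := δ.toReal with hrdef
  have hr0 : 0 < r := ENNReal.toReal_pos hδ0.ne' hδtop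
  have hδr : ENNReal.ofReal r = δ := ENNReal.ofReal_toReal hδtop
  have hBtb : TotallyBounded B := (hBbd.isCompact_closure.totallyBounded).subset subset_closure
  obtain ⟨t, htB, htfin, htcov⟩ := totallyBounded_iff_subset.mp hBtb _
    (Metric.dist_mem_uniformity (show (0:ℝ) < r/4 by positivity))
  have hnet : ∀ y ∈ t, ∀ᶠ n : ℕ in atTop,
      ∃ p ∈ ((n : ℝ)⁻¹) • msum A n, dist y p ≤ r/2 := by
    intro y hy
    have hyC' : y ∈ C' := hBC' (htB hy)
    obtain ⟨cy, hcyC, hcyd⟩ := Metric.mem_closure_iff.mp hyC' (r/4) (by positivity)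
    obtain ⟨CC, hCC⟩ := exists_approx hR hcyC
    have h1 : ∀ᶠ n : ℕ in atTop, CC / (n:ℝ) ≤ r/4 :=
      (tendsto_const_div_atTop_nhds_zero_nat CC).eventually
        (eventually_le_nhds (show (0:ℝ) < r/4 by positivity))
    filter_upwards [h1, eventually_ge_atTop 1] with n hn1 hn2
    obtain ⟨p, hp, hpd⟩ := hCC n hn2
    refine ⟨p, hp, ?_⟩
    calc dist y p ≤ dist y cy + dist cy p := dist_triangle _ _ _
      _ ≤ r/4 + r/4 := add_le_add hcyd.le (hpd.trans hn1)
      _ = r/2 := by ring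
  have hall : ∀ᶠ n : ℕ in atTop, (∀ y ∈ t,
      ∃ p ∈ ((n : ℝ)⁻¹) • msum A n, dist y p ≤ r/2) ∧ 1 ≤ n :=
    ((eventually_all_finite htfin).mpr hnet).and (eventually_ge_atTop 1)
  obtain ⟨N, hN⟩ := eventually_atTop.mp hall
  refine ⟨N, fun n hn => ?_⟩
  obtain ⟨hNt, hn1⟩ := hN n hn
  have key : EMetric.hausdorffEdist (((n : ℝ)⁻¹) • msum A n) B ≤ ENNReal.ofReal r := by
    refine EMetric.hausdorffEdist_le_of_infEdist ?_ ?_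
    · intro p hp
      rw [EMetric.infEdist_zero_of_mem (hSnB n hn1 hp)]
      exact zero_le
    · intro b hb
      have hbU := htcov hb
      simp only [Set.mem_iUnion] at hbU
      obtain ⟨y, hyt, hby⟩ := hbU
      obtain ⟨p, hp, hyp⟩ := hNt y hyt
      calc EMetric.infEdist b (((n : ℝ)⁻¹) • msum A n) ≤ edist b p :=
            EMetric.infEdist_le_edist_of_mem hp
        _ = ENNReal.ofReal (dist b p) := edist_dist _ _
        _ ≤ ENNReal.ofReal r := by
            refine ENNReal.ofReal_le_ofReal ?_
            have hd : dist b y < r/4 := hby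
            calc dist b p ≤ dist b y + dist y p := dist_triangle _ _ _
              _ ≤ r/4 + r/2 := add_le_add hd.le hyp
              _ ≤ r := by linarith
  exact key.trans (hδr.le.trans hδε.le)
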